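/- Let f be a nilpotent operator on V, and consider finitely many chains v_{i,1} = f^{k_i−1}(v_i), …, v_{i,k_i} = v_i generated by vectors v_i of heights k_i. If the side vectors v_{1,1}, …, v_{s,1} (which lie in Ker f) are linearly independent, then the entire collection of all chain vectors is linearly independent. -/
import Mathlib


theorem stmt_14 {K V : Type*} [Field K] [AddCommGroup V] [Module K V]
    (f : V →ₗ[K] V) (hf : ∀ v : V, ∃ k : ℕ, (f ^ k) v = 0)
    {s : ℕ} (v : Fin s → V) (k : Fin s → ℕ)
    (hpos : ∀ i, 1 ≤ k i)
    (hheight : ∀ i, (f ^ k i) (v i) = 0 ∧ (f ^ (k i - 1)) (v i) ≠ 0)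
    (hside : LinearIndependent K (fun i => (f ^ (k i - 1)) (v i))) :
    LinearIndependent K
      (fun p : Σ i : Fin s, Fin (k i) => (f ^ (k p.1 - 1 - (p.2 : ℕ))) (v p.1)) := by
  rw [Fintype.linearIndependent_iff]
  intro c hc
  set M := Finset.univ.sup k with hM
  have key : ∀ n : ℕ, ∀ p : Σ i : Fin s, Fin (k i), M - n ≤ (p.2 : ℕ) → c p = 0 := by
    intro n
    induction n with
    | zero =>
      intro p hp
      exfalso
      have h1 : (p.2 : ℕ) < k p.1 := p.2.isLt
      have h2 : k p.1 ≤ M := Finset.le_sup (Finset.mem_univ _)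
      omega
    | succ n ih =>
      intro p hp
      by_cases hcase : M - n ≤ (p.2 : ℕ)
      · exact ih p hcase
      push_neg at hcase
      have ht : (p.2 : ℕ) = M - (n + 1) ∧ n + 1 ≤ M := by omega
      set t := (p.2 : ℕ) with htdef
      -- apply f^t to the relation
      have hft : ∑ q : Σ i : Fin s, Fin (k i),
          c q • (f ^ (t + (k q.1 - 1 - (q.2 : ℕ)))) (v q.1) = 0 := by
        have h := congrArg (fun x => (f ^ t) x) hc
        simp only [map_sum, map_smul, map_zero] at h
        rw [← h]
        refine Finset.sum_congr rfl fun q _ => ?_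
        rw [pow_add, Module.End.mul_apply]
      -- each summand: 0 if q.2 ≠ t, side vector if q.2 = t
      have hterm : ∀ q : Σ i : Fin s, Fin (k i), (q.2 : ℕ) ≠ t →
          c q • (f ^ (t + (k q.1 - 1 - (q.2 : ℕ)))) (v q.1) = 0 := by
        intro q hq
        rcases lt_or_gt_of_ne hq with hlt | hgt
        · -- q.2 < t : vector is 0
          have hkq : (q.2 : ℕ) < k q.1 := q.2.isLt
          have he : t + (k q.1 - 1 - (q.2 : ℕ)) =
              (t + (k q.1 - 1 - (q.2 : ℕ)) - k q.1) + k q.1 := by omega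
          rw [he, pow_add, Module.End.mul_apply, (hheight q.1).1, map_zero, smul_zero]
        · -- q.2 > t : coefficient is 0 by ih
          have : c q = 0 := by
            apply ih
            omega
          rw [this, zero_smul]
      have hsum : ∑ i : Fin s,
          (if h : t < k i then c ⟨i, ⟨t, h⟩⟩ else 0) • (f ^ (k i - 1)) (v i) = 0 := by
        rw [← hft, ← Finset.univ_sigma_univ, Finset.sum_sigma]
        refine Finset.sum_congr rfl fun i _ => ?_
        by_cases hik : t < k i
        · rw [dif_pos hik]
          rw [Finset.sum_eq_single (⟨t, hik⟩ : Fin (k i))]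
          · have he : t + (k i - 1 - t) = k i - 1 := by omega
            simp only [Fin.val_mk, he]
          · intro j _ hj
            exact hterm ⟨i, j⟩ (by simpa [Fin.ext_iff] using hj)
          · intro h
            exact absurd (Finset.mem_univ _) h
        · rw [dif_neg hik, zero_smul]
          symm
          apply Finset.sum_eq_zero
          intro j _
          apply hterm ⟨i, j⟩
          have := j.isLt
          simp only
          omega
      have hd := Fintype.linearIndependent_iff.mp hside _ hsum
      have := hd p.1
      rw [dif_pos (show t < k p.1 from p.2.isLt)] at this
      convert this using 2
  intro p
  exact key M p (by simp)
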